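/- arXiv:2507.12503 — 2 statements merged into one kernel-verified Lean document; each statement's English description precedes it below -/
import Mathlib

section
/- Let G be a finite simple directed graph without self-loops. Then for every integer k≥3, r_k = r_{k−1} A_α − r_{k−2} (D − I), where r_k := Σ_{r=0}^{R−1} α^r P_{(k,r)}. -/
/-!
Since `α ^ R = 1`, the entry `(r_k)_{uv}` is the sum of `α ^ rot W` over all NBT walks `W`
of length `k` from `u` to `v`, and `|α| = 1` makes `(A_α)_{xv} = α ^ rot(x, v)` on edges.
Hence `(r_{k-1} A_α)_{uv}` sums over NBT walks of length `k - 1` extended by one more step to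
`v`. Those extensions that stay NBT give `(r_k)_{uv}`; the others end in a backtrack
`v → y → v`, which has rotation `0`, after an NBT walk of length `k - 2` to `v`, and for
`k ≥ 3` there are exactly `deg v - 1` choices of `y`, giving `(r_{k-2} (D - I))_{uv}`.
-/

open Matrix BigOperators
open scoped Classical

namespace CNBT

variable {n : ℕ}

/-- `u ↔ v`: directed edges in both directions. -/
def bidir (E : Fin n → Fin n → Prop) (u v : Fin n) : Prop := E u v ∧ E v u

/-- `u → v`: a directed edge from `u` to `v` only. -/
def fwd (E : Fin n → Fin n → Prop) (u v : Fin n) : Prop := E u v ∧ ¬ E v u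

/-- `u ← v`: a directed edge from `v` to `u` only. -/
def bwd (E : Fin n → Fin n → Prop) (u v : Fin n) : Prop := E v u ∧ ¬ E u v

/-- adjacency in the underlying undirected graph `U_G`. -/
def adj (E : Fin n → Fin n → Prop) (u v : Fin n) : Prop := E u v ∨ E v u

/-- degree of `u` in the underlying undirected graph. -/
noncomputable def deg (E : Fin n → Fin n → Prop) (u : Fin n) : ℕ :=
  (Finset.univ.filter (fun v => adj E u v)).card

/-- the Hermitian adjacency matrix `A_α`. -/
noncomputable def Aalpha (E : Fin n → Fin n → Prop) (α : ℂ) : Matrix (Fin n) (Fin n) ℂ :=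
  Matrix.of fun u v =>
    if bidir E u v then 1
    else if fwd E u v then α
    else if bwd E u v then (starRingEnd ℂ) α
    else 0

/-- the degree diagonal matrix `D` (complex entries). -/
noncomputable def Dmat (E : Fin n → Fin n → Prop) : Matrix (Fin n) (Fin n) ℂ :=
  Matrix.diagonal fun u => (deg E u : ℂ)

/-- the degree diagonal matrix `D` (integer entries). -/
noncomputable def DmatZ (E : Fin n → Fin n → Prop) : Matrix (Fin n) (Fin n) ℤ :=
  Matrix.diagonal fun u => (deg E u : ℤ)

/-- indicator matrix `↔A` of the relation `u ↔ v`. -/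
noncomputable def AbiZ (E : Fin n → Fin n → Prop) : Matrix (Fin n) (Fin n) ℤ :=
  Matrix.of fun u v => if bidir E u v then 1 else 0

/-- indicator matrix `→A` of the relation `u → v`. -/
noncomputable def AfwdZ (E : Fin n → Fin n → Prop) : Matrix (Fin n) (Fin n) ℤ :=
  Matrix.of fun u v => if fwd E u v then 1 else 0

/-- indicator matrix `←A` of the relation `u ← v`. -/
noncomputable def AbwdZ (E : Fin n → Fin n → Prop) : Matrix (Fin n) (Fin n) ℤ :=
  Matrix.of fun u v => if bwd E u v then 1 else 0

/-- rotation of a single step: `1` if `u → v`, `-1` if `u ← v`, `0` if `u ↔ v`. -/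
noncomputable def stepRot (E : Fin n → Fin n → Prop) (u v : Fin n) : ℤ :=
  if fwd E u v then 1 else if bwd E u v then -1 else 0

/-- `w : Fin (k+1) → Fin n` is a non-backtracking mixed walk of length `k`:
consecutive vertices are adjacent in `U_G`, and no vertex equals the vertex two steps later. -/
def IsNBTWalk (E : Fin n → Fin n → Prop) (k : ℕ) (w : Fin (k + 1) → Fin n) : Prop :=
  (∀ i j : Fin (k + 1), (j : ℕ) = (i : ℕ) + 1 → adj E (w i) (w j)) ∧
  (∀ i j : Fin (k + 1), (j : ℕ) = (i : ℕ) + 2 → w i ≠ w j)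

/-- total (integer) rotation of a mixed walk of length `k`. -/
noncomputable def walkRot (E : Fin n → Fin n → Prop) (k : ℕ) (w : Fin (k + 1) → Fin n) : ℤ :=
  ∑ i : Fin k, stepRot E (w i.castSucc) (w i.succ)

/-- `P_{(k,r)}`: the `(u,v)` entry counts NBT mixed walks of length `k`
and rotation `r` (mod `R`) from `u` to `v`. -/
noncomputable def Pmat (E : Fin n → Fin n → Prop) (R : ℕ) [NeZero R] (k : ℕ) (r : ZMod R) :
    Matrix (Fin n) (Fin n) ℤ :=
  Matrix.of fun u v =>
    ((Finset.univ.filter (fun w : Fin (k + 1) → Fin n =>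
      w 0 = u ∧ w (Fin.last k) = v ∧ IsNBTWalk E k w ∧
      ((walkRot E k w : ZMod R) = r))).card : ℤ)

/-- `r_k := Σ_{r=0}^{R-1} α^r P_{(k,r)}`. -/
noncomputable def rk (E : Fin n → Fin n → Prop) (α : ℂ) (R : ℕ) [NeZero R] (k : ℕ) :
    Matrix (Fin n) (Fin n) ℂ :=
  ∑ r : ZMod R, (α ^ r.val) • (Pmat E R k r).map (fun z : ℤ => (z : ℂ))

/-- `Ē`: directed edges obtained by orienting each edge of `U_G` in both directions. -/
abbrev DEdge (E : Fin n → Fin n → Prop) : Type := { p : Fin n × Fin n // adj E p.1 p.2 }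

/-- the non-backtracking matrix `B`. -/
noncomputable def Bmat (E : Fin n → Fin n → Prop) : Matrix (DEdge E) (DEdge E) ℂ :=
  Matrix.of fun e f => if e.1.2 = f.1.1 ∧ e.1.1 ≠ f.1.2 then 1 else 0

/-- edge type `λ_e`. -/
noncomputable def lam (E : Fin n → Fin n → Prop) (α : ℂ) (e : DEdge E) : ℂ :=
  if bidir E e.1.1 e.1.2 then 1
  else if fwd E e.1.1 e.1.2 then α
  else (starRingEnd ℂ) α

/-- the complex non-backtracking matrix `B_α = B Λ`. -/
noncomputable def Balpha (E : Fin n → Fin n → Prop) (α : ℂ) : Matrix (DEdge E) (DEdge E) ℂ :=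
  Bmat E * Matrix.diagonal (lam E α)

/-- `↔B`: the part of `B` with `i_f ↔ t_f` (integer entries). -/
noncomputable def BbiZ (E : Fin n → Fin n → Prop) : Matrix (DEdge E) (DEdge E) ℤ :=
  Matrix.of fun e f =>
    if (e.1.2 = f.1.1 ∧ e.1.1 ≠ f.1.2) ∧ bidir E f.1.1 f.1.2 then 1 else 0

/-- `→B`: the part of `B` with `i_f → t_f` (integer entries). -/
noncomputable def BfwdZ (E : Fin n → Fin n → Prop) : Matrix (DEdge E) (DEdge E) ℤ :=
  Matrix.of fun e f =>
    if (e.1.2 = f.1.1 ∧ e.1.1 ≠ f.1.2) ∧ fwd E f.1.1 f.1.2 then 1 else 0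

/-- `←B`: the part of `B` with `i_f ← t_f` (integer entries). -/
noncomputable def BbwdZ (E : Fin n → Fin n → Prop) : Matrix (DEdge E) (DEdge E) ℤ :=
  Matrix.of fun e f =>
    if (e.1.2 = f.1.1 ∧ e.1.1 ≠ f.1.2) ∧ bwd E f.1.1 f.1.2 then 1 else 0

/-- `Q_{(k,r)}`: the `(e,f)` entry counts NBT mixed walks of length `k` and rotation `r`
whose last step traverses `f`, to which `e` can be prepended while keeping the walk NBT;
`Q_{(0,0)} = I` and `Q_{(0,r)} = 0` for `r ≠ 0`. -/
noncomputable def Qmat (E : Fin n → Fin n → Prop) (R : ℕ) [NeZero R] :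
    (k : ℕ) → ZMod R → Matrix (DEdge E) (DEdge E) ℤ
  | 0, r => if r = 0 then 1 else 0
  | (k + 1), r => Matrix.of fun e f =>
      ((Finset.univ.filter (fun w : Fin (k + 1 + 1) → Fin n =>
        IsNBTWalk E (k + 1) w ∧ ((walkRot E (k + 1) w : ZMod R) = r) ∧
        w ⟨k, by omega⟩ = f.1.1 ∧ w (Fin.last (k + 1)) = f.1.2 ∧
        e.1.2 = w 0 ∧ e.1.1 ≠ w 1)).card : ℤ)

/-- the double traversal `C²` of a closed mixed walk `C` of length `k`. -/
noncomputable def doubleWalk (k : ℕ) (w : Fin (k + 1) → Fin n) : Fin (2 * k + 1) → Fin n :=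
  fun i =>
    if h : (i : ℕ) ≤ k then w ⟨(i : ℕ), Nat.lt_succ_of_le h⟩
    else w ⟨(i : ℕ) - k, by have := i.isLt; omega⟩

/-- `n_{(k,r)}`: the number of tailless NBT cycles of length `k` and rotation `r`,
i.e. closed mixed walks `C` such that both `C` and `C²` are NBT. -/
noncomputable def ncyc (E : Fin n → Fin n → Prop) (R : ℕ) [NeZero R] (k : ℕ) (r : ZMod R) : ℤ :=
  ((Finset.univ.filter (fun w : Fin (k + 1) → Fin n =>
    w 0 = w (Fin.last k) ∧ IsNBTWalk E k w ∧
    IsNBTWalk E (2 * k) (doubleWalk k w) ∧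
    ((walkRot E k w : ZMod R) = r))).card : ℤ)

/-- the in-vector `g_α^in`. -/
noncomputable def inVec (E : Fin n → Fin n → Prop) (g : DEdge E → ℂ) : Fin n → ℂ :=
  fun u => ∑ e : DEdge E, if e.1.2 = u then g e else 0

/-- the out-vector `g_α^out`. -/
noncomputable def outVec (E : Fin n → Fin n → Prop) (α : ℂ) (g : DEdge E → ℂ) : Fin n → ℂ :=
  fun u => ∑ e : DEdge E, if e.1.1 = u then lam E α e * g e else 0


section Walks

variable (E : Fin n → Fin n → Prop)

lemma stepRot_add_stepRot_swap (u v : Fin n) : stepRot E u v + stepRot E v u = 0 := by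
  unfold stepRot fwd bwd
  by_cases huv : E u v <;> by_cases hvu : E v u <;> simp [huv, hvu]

lemma walkRot_snoc {k : ℕ} (w : Fin (k + 1) → Fin n) (x : Fin n) :
    walkRot E (k + 1) (Fin.snoc w x) = walkRot E k w + stepRot E (w (Fin.last k)) x := by
  simp only [walkRot, Fin.sum_univ_castSucc, Fin.succ_castSucc, Fin.snoc_castSucc,
    Fin.succ_last, Fin.snoc_last]

lemma isNBTWalk_snoc_iff {k : ℕ} (w : Fin (k + 2) → Fin n) (x : Fin n) :
    IsNBTWalk E (k + 2) (Fin.snoc w x) ↔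
      IsNBTWalk E (k + 1) w ∧ adj E (w (Fin.last (k + 1))) x ∧
        w (Fin.last k).castSucc ≠ x := by
  constructor
  · rintro ⟨hadj, hnbt⟩
    refine ⟨⟨fun i j hij => ?_, fun i j hij => ?_⟩, ?_, ?_⟩
    · simpa using hadj i.castSucc j.castSucc hij
    · simpa using hnbt i.castSucc j.castSucc hij
    · simpa using hadj (Fin.last (k + 1)).castSucc (Fin.last (k + 2)) rfl
    · simpa using hnbt (Fin.last k).castSucc.castSucc (Fin.last (k + 2)) rfl
  · rintro ⟨⟨hadj, hnbt⟩, hlast, hback⟩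
    refine ⟨fun i j hij => ?_, fun i j hij => ?_⟩
    · induction j using Fin.lastCases with
      | last =>
        obtain rfl : i = (Fin.last (k + 1)).castSucc := Fin.ext (by simp at hij ⊢; omega)
        simpa
      | cast j =>
        obtain ⟨i, rfl⟩ : ∃ i' : Fin (k + 2), i = i'.castSucc :=
          ⟨⟨i, by have := j.isLt; simp at hij; omega⟩, rfl⟩
        simpa using hadj i j hij
    · induction j using Fin.lastCases with
      | last =>
        obtain rfl : i = (Fin.last k).castSucc.castSucc := Fin.ext (by simp at hij ⊢; omega)
        simpa
      | cast j =>
        obtain ⟨i, rfl⟩ : ∃ i' : Fin (k + 2), i = i'.castSucc :=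
          ⟨⟨i, by have := j.isLt; simp at hij; omega⟩, rfl⟩
        simpa using hnbt i j hij

lemma snoc_init_of_last_eq {β : Type*} {k : ℕ} {w : Fin (k + 1) → β} {v : β}
    (h : w (Fin.last k) = v) : Fin.snoc (Fin.init w) v = w :=
  h ▸ Fin.snoc_init_self w

end Walks

lemma pow_val_intCast_eq_zpow {M : Type*} [GroupWithZero M] {α : M} {R : ℕ} [NeZero R]
    (hroot : α ^ R = 1) (m : ℤ) : α ^ (m : ZMod R).val = α ^ m := by
  have hα : α ≠ 0 := by rintro rfl; simp [NeZero.ne R] at hroot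
  have h := zpow_eq_zpow_emod' (x := Units.mk0 α hα) m (n := R) (by ext; simp [hroot])
  rw [← zpow_natCast, ZMod.val_intCast]
  simpa using (congrArg Units.val h).symm

section WalkSums

open Finset

variable (E : Fin n → Fin n → Prop) {α : ℂ}

noncomputable def nbtWalksFrom (k : ℕ) (u : Fin n) : Finset (Fin (k + 1) → Fin n) :=
  univ.filter fun w => w 0 = u ∧ IsNBTWalk E k w

noncomputable def nbtWalks (k : ℕ) (u v : Fin n) : Finset (Fin (k + 1) → Fin n) :=
  (nbtWalksFrom E k u).filter fun w => w (Fin.last k) = v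

lemma rk_apply {R : ℕ} [NeZero R] (hroot : α ^ R = 1) (k : ℕ) (u v : Fin n) :
    rk E α R k u v = ∑ w ∈ nbtWalks E k u v, α ^ walkRot E k w := by
  rw [← sum_fiberwise (nbtWalks E k u v) (fun w => (walkRot E k w : ZMod R))]
  simp only [rk, Matrix.sum_apply, Matrix.smul_apply, Matrix.map_apply, Pmat, Matrix.of_apply,
    smul_eq_mul]
  refine sum_congr rfl fun r _ => ?_
  have hval : ∀ w ∈ (nbtWalks E k u v).filter (fun w => (walkRot E k w : ZMod R) = r),
      α ^ walkRot E k w = α ^ r.val := fun w hw => by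
    rw [← (mem_filter.1 hw).2, pow_val_intCast_eq_zpow hroot]
  rw [sum_congr rfl hval, sum_const, nsmul_eq_mul, mul_comm]
  congr 4
  ext w
  simp only [nbtWalks, nbtWalksFrom, mem_filter, mem_univ, true_and]
  tauto

lemma Aalpha_apply (habs : ‖α‖ = 1) (x v : Fin n) :
    Aalpha E α x v = if adj E x v then α ^ stepRot E x v else 0 := by
  unfold Aalpha stepRot adj bidir fwd bwd
  by_cases hxv : E x v <;> by_cases hvx : E v x <;> simp [hxv, hvx, Complex.inv_eq_conj habs]

lemma sum_nbtWalks_mul_ite (hα : α ≠ 0) (k : ℕ) (u v : Fin n) :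
    ∑ x, (∑ w ∈ nbtWalks E k u x, α ^ walkRot E k w) *
        (if adj E x v then α ^ stepRot E x v else 0) =
      ∑ w ∈ (nbtWalksFrom E k u).filter (fun w => adj E (w (Fin.last k)) v),
        α ^ walkRot E (k + 1) (Fin.snoc w v) := by
  rw [sum_filter, ← sum_fiberwise (nbtWalksFrom E k u) (fun w => w (Fin.last k))]
  refine sum_congr rfl fun x _ => ?_
  rw [nbtWalks, sum_mul]
  refine sum_congr rfl fun w hw => ?_
  rw [walkRot_snoc, (mem_filter.1 hw).2, zpow_add₀ hα, mul_ite, mul_zero]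

lemma sum_nbtWalks_eq_sum_snoc (k : ℕ) (u v : Fin n) (f : (Fin (k + 3) → Fin n) → ℂ) :
    ∑ w ∈ nbtWalks E (k + 2) u v, f w =
      ∑ w ∈ ((nbtWalksFrom E (k + 1) u).filter fun w => adj E (w (Fin.last (k + 1))) v).filter
        (fun w => w (Fin.last k).castSucc ≠ v), f (Fin.snoc w v) := by
  refine sum_nbij' Fin.init (Fin.snoc · v) (fun w hw => ?_) (fun w hw => ?_) (fun w hw => ?_)
    (fun w _ => Fin.init_snoc _ _) (fun w hw => ?_)
  · rw [← snoc_init_of_last_eq (mem_filter.1 hw).2] at hw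
    simpa [nbtWalks, nbtWalksFrom, isNBTWalk_snoc_iff, and_assoc] using hw
  · simp_all [nbtWalks, nbtWalksFrom, isNBTWalk_snoc_iff]
  · exact snoc_init_of_last_eq (mem_filter.1 hw).2
  · rw [snoc_init_of_last_eq (mem_filter.1 hw).2]

lemma cast_card_erase_of_adj {v y : Fin n} (h : adj E v y) :
    (#((univ.filter (adj E v)).erase y) : ℂ) = deg E v - 1 := by
  have hy : y ∈ univ.filter (adj E v) := mem_filter.2 ⟨mem_univ y, h⟩
  rw [card_erase_of_mem hy, Nat.cast_sub (card_pos.2 ⟨y, hy⟩), deg, Nat.cast_one]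

lemma sum_backtracking_snoc (k : ℕ) (u v : Fin n) :
    ∑ w ∈ ((nbtWalksFrom E (k + 2) u).filter fun w => adj E (w (Fin.last (k + 2))) v).filter
        (fun w => w (Fin.last (k + 1)).castSucc = v), α ^ walkRot E (k + 3) (Fin.snoc w v) =
      (∑ w ∈ nbtWalks E (k + 1) u v, α ^ walkRot E (k + 1) w) * ((deg E v : ℂ) - 1) := by
  have hcard : ∀ w ∈ nbtWalks E (k + 1) u v,
      α ^ walkRot E (k + 1) w * ((deg E v : ℂ) - 1) =
        ∑ _y ∈ (univ.filter (adj E v)).erase (w (Fin.last k).castSucc),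
          α ^ walkRot E (k + 1) w := by
    intro w hw
    simp only [nbtWalks, nbtWalksFrom, mem_filter, mem_univ, true_and] at hw
    obtain ⟨⟨-, hadj, -⟩, hlast⟩ := hw
    have hstep := hadj (Fin.last k).castSucc (Fin.last (k + 1)) rfl
    rw [hlast] at hstep
    rw [sum_const, nsmul_eq_mul, cast_card_erase_of_adj E hstep.symm, mul_comm]
  rw [sum_mul, sum_congr rfl hcard, sum_sigma']
  refine sum_nbij' (fun w => ⟨Fin.init w, w (Fin.last _)⟩) (fun p => Fin.snoc p.1 p.2)
    (fun w hw => ?_) (fun p hp => ?_) (fun w _ => Fin.snoc_init_self w) (fun p _ => ?_)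
    (fun w hw => ?_)
  · obtain ⟨w, y, rfl⟩ : ∃ w' y, w = Fin.snoc w' y := ⟨_, _, (Fin.snoc_init_self w).symm⟩
    simp only [nbtWalksFrom, isNBTWalk_snoc_iff, mem_filter, mem_univ, true_and, Fin.snoc_last,
      Fin.snoc_castSucc, Fin.snoc_apply_zero] at hw
    obtain ⟨⟨⟨h0, hnbt, hy, hback⟩, -⟩, hlast⟩ := hw
    simpa [nbtWalks, nbtWalksFrom, h0, hnbt, hlast, Ne.symm hback] using hlast ▸ hy
  · obtain ⟨⟨⟨h0, hnbt⟩, hlast⟩, hback, hy⟩ := by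
      simpa only [nbtWalks, nbtWalksFrom, mem_sigma, mem_erase, mem_filter, mem_univ,
        true_and] using hp
    simp only [nbtWalksFrom, isNBTWalk_snoc_iff, mem_filter, mem_univ, true_and, Fin.snoc_last,
      Fin.snoc_castSucc, Fin.snoc_apply_zero]
    exact ⟨⟨⟨h0, hnbt, hlast ▸ hy, Ne.symm hback⟩, hy.symm⟩, hlast⟩
  · simp
  · obtain ⟨w, y, rfl⟩ : ∃ w' y, w = Fin.snoc w' y := ⟨_, _, (Fin.snoc_init_self w).symm⟩
    have hlast : w (Fin.last (k + 1)) = v := by simpa using (mem_filter.1 hw).2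
    rw [walkRot_snoc, walkRot_snoc, Fin.snoc_last, hlast, add_assoc, stepRot_add_stepRot_swap,
      add_zero, Fin.init_snoc]

lemma sum_nbtWalks_mul_step (hα : α ≠ 0) (k : ℕ) (u v : Fin n) :
    ∑ x, (∑ w ∈ nbtWalks E (k + 2) u x, α ^ walkRot E (k + 2) w) *
        (if adj E x v then α ^ stepRot E x v else 0) =
      ∑ w ∈ nbtWalks E (k + 3) u v, α ^ walkRot E (k + 3) w +
        (∑ w ∈ nbtWalks E (k + 1) u v, α ^ walkRot E (k + 1) w) * ((deg E v : ℂ) - 1) := by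
  rw [sum_nbtWalks_mul_ite E hα, ← sum_filter_not_add_sum_filter _
    (fun w => w (Fin.last (k + 1)).castSucc = v), sum_backtracking_snoc,
    sum_nbtWalks_eq_sum_snoc]

end WalkSums

theorem statement1_general {n : ℕ} (E : Fin n → Fin n → Prop)
    (α : ℂ) (habs : ‖α‖ = 1) (R : ℕ) [NeZero R]
    (hroot : α ^ R = 1) :
    ∀ k : ℕ, 3 ≤ k →
      rk E α R k = rk E α R (k - 1) * Aalpha E α - rk E α R (k - 2) * (Dmat E - 1) := by
  intro k hk
  obtain ⟨k, rfl⟩ : ∃ m, k = m + 3 := ⟨k - 3, by omega⟩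
  have hα : α ≠ 0 := norm_ne_zero_iff.1 (by simp [habs])
  have hD : Dmat E - 1 = diagonal fun x => (deg E x : ℂ) - 1 := by
    rw [Dmat, ← diagonal_one, diagonal_sub]
  ext u v
  rw [show k + 3 - 1 = k + 2 by omega, show k + 3 - 2 = k + 1 by omega, Matrix.sub_apply,
    mul_apply, hD, mul_diagonal]
  simp only [rk_apply E hroot, Aalpha_apply E habs]
  rw [sum_nbtWalks_mul_step E hα]
  ring

/-- for every `k ≥ 3`, `r_k = r_{k−1} A_α − r_{k−2} (D − I)`. -/
theorem statement1 {n : ℕ} (E : Fin n → Fin n → Prop) (hirr : ∀ u : Fin n, ¬ E u u)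
    (α : ℂ) (habs : ‖α‖ = 1) (R : ℕ) [NeZero R]
    (hroot : α ^ R = 1) (hmin : ∀ k : ℕ, 0 < k → α ^ k = 1 → R ≤ k) :
    ∀ k : ℕ, 3 ≤ k →
      rk E α R k = rk E α R (k - 1) * Aalpha E α - rk E α R (k - 2) * (Dmat E - 1) :=
  statement1_general E α habs R hroot

end CNBT
end

section
/- Let G be a finite simple directed graph without self-loops. Then for every integer k≥1, tr((B_α)^k) = Σ_{r=0}^{R−1} α^r n_{(k,r)}, where n_{(k,r)} is the number of tailless NBT cycles of length k and rotation r. -/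
open Matrix BigOperators
open scoped Classical

/-!
Expanding the trace, `tr (B_α ^ k)` is a sum over cyclic sequences `c` of `k` directed edges of
`∏ i, (B_α) (c i) (c (i + 1))`. Such a product vanishes unless each `c i → c (i + 1)` is a
non-backtracking transition, and then it equals `∏ i, λ (c i) = α ^ (rotation)`, because
`λ_e = α ^ r(e)` when `|α| = 1`. A non-backtracking edge cycle is determined by its cyclic
sequence of initial vertices, and these sequences are exactly the tailless NBT cycles:
non-backtracking across the closing vertex is what `C²` being NBT says. Grouping the cycles by
rotation mod `R` gives the formula.
-/

open Finset Fin.NatCast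

theorem zpow_sum₀ {ι G₀ : Type*} [CommGroupWithZero G₀] {a : G₀} (ha : a ≠ 0) (s : Finset ι)
    (f : ι → ℤ) : a ^ (∑ i ∈ s, f i) = ∏ i ∈ s, a ^ f i := by
  induction s using Finset.cons_induction with
  | empty => simp
  | cons i s _ ih => rw [sum_cons, prod_cons, zpow_add₀ ha, ih]

theorem zpow_eq_pow_val_intCast {G₀ : Type*} [GroupWithZero G₀] {a : G₀} (ha : a ≠ 0)
    {R : ℕ} [NeZero R] (hR : a ^ R = 1) (z : ℤ) : a ^ z = a ^ (z : ZMod R).val := by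
  rw [← zpow_natCast a, ZMod.val_intCast]
  conv_lhs => rw [← Int.emod_add_mul_ediv z R]
  rw [zpow_add₀ ha, _root_.zpow_mul, zpow_natCast, hR, _root_.one_zpow, mul_one]

theorem Finset.sum_pow_val_eq_sum_mul_card {ι M : Type*} [CommSemiring M] (a : M) {R : ℕ}
    [NeZero R] (s : Finset ι) (g : ι → ZMod R) :
    ∑ i ∈ s, a ^ (g i).val = ∑ r, a ^ r.val * (#{i ∈ s | g i = r} : M) := by
  rw [← sum_fiberwise' s g (fun r => a ^ r.val)]
  simp [mul_comm]

namespace Fin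

variable {X : Type*} {m : ℕ}

theorem snoc_self_zero_apply (v : Fin (m + 1) → X) (j : Fin (m + 1 + 1)) :
    (snoc v (v 0) : Fin (m + 1 + 1) → X) j = v ((j : ℕ) : Fin (m + 1)) := by
  induction j using lastCases with
  | last => simp
  | cast i => simp

theorem snoc_self_zero_succ (v : Fin (m + 1) → X) (i : Fin (m + 1)) :
    (snoc v (v 0) : Fin (m + 1 + 1) → X) i.succ = v (i + 1) := by
  rw [snoc_self_zero_apply, val_succ, Nat.cast_succ, cast_val_eq_self]

end Fin

namespace Matrix

variable {ι R : Type*} [Fintype ι] [DecidableEq ι] [CommSemiring R]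

theorem pow_succ_apply_eq_sum_paths (M : Matrix ι ι R) (m : ℕ) (u v : ι) :
    (M ^ (m + 1)) u v = ∑ c : Fin (m + 1) → ι with c 0 = u,
      (∏ i : Fin m, M (c i.castSucc) (c i.succ)) * M (c (Fin.last m)) v := by
  induction m generalizing v with
  | zero =>
    rw [pow_one, sum_filter, ← (Equiv.funUnique (Fin 1) ι).symm.sum_comp]
    simp
  | succ m ih =>
    rw [pow_succ, mul_apply, sum_filter, ← (Fin.snocEquiv fun _ => ι).sum_comp,
      Fintype.sum_prod_type]
    simp_rw [ih, sum_mul, sum_filter]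
    refine sum_congr rfl fun x _ => sum_congr rfl fun c _ => ?_
    simp only [Fin.snocEquiv_apply, Fin.snoc_apply_zero, Fin.prod_univ_castSucc, Fin.succ_castSucc,
      Fin.succ_last, Fin.snoc_castSucc, Fin.snoc_last, mul_assoc]

theorem trace_pow_succ_eq_sum_cycles (M : Matrix ι ι R) (m : ℕ) :
    trace (M ^ (m + 1)) = ∑ c : Fin (m + 1) → ι, ∏ i, M (c i) (c (i + 1)) := by
  have hcycle (c : Fin (m + 1) → ι) : ∏ i, M (c i) (c (i + 1)) =
      (∏ i : Fin m, M (c i.castSucc) (c i.succ)) * M (c (Fin.last m)) (c 0) := by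
    rw [Fin.prod_univ_castSucc, Fin.last_add_one]
    simp only [Fin.coeSucc_eq_succ]
  simp_rw [hcycle, trace, diag, pow_succ_apply_eq_sum_paths]
  rw [← sum_fiberwise univ (fun c : Fin (m + 1) → ι => c 0)]
  refine sum_congr rfl fun u _ => sum_congr rfl fun c hc => ?_
  rw [(mem_filter.1 hc).2]

end Matrix

namespace CNBT

section

variable {n m : ℕ} {E : Fin n → Fin n → Prop}

-- Indices are in `Fin (m + 1)`, so `i + 1` and `i + 2` wrap around the cycle.
def IsNBTCycle (E : Fin n → Fin n → Prop) (v : Fin (m + 1) → Fin n) : Prop :=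
  ∀ i, adj E (v i) (v (i + 1)) ∧ v i ≠ v (i + 2)

def IsNBTEdgeCycle (E : Fin n → Fin n → Prop) (c : Fin (m + 1) → DEdge E) : Prop :=
  ∀ i, (c i).1.2 = (c (i + 1)).1.1 ∧ (c i).1.1 ≠ (c (i + 1)).1.2

def IsTaillessCycle (E : Fin n → Fin n → Prop) (k : ℕ) (w : Fin (k + 1) → Fin n) : Prop :=
  w 0 = w (Fin.last k) ∧ IsNBTWalk E k w ∧ IsNBTWalk E (2 * k) (doubleWalk k w)

noncomputable def cycleRot (E : Fin n → Fin n → Prop) (v : Fin (m + 1) → Fin n) : ℤ :=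
  ∑ i, stepRot E (v i) (v (i + 1))

theorem lam_eq_zpow_stepRot {α : ℂ} (habs : ‖α‖ = 1) (e : DEdge E) :
    lam E α e = α ^ stepRot E e.1.1 e.1.2 := by
  obtain ⟨⟨u, v⟩, huv⟩ := e
  simp only [adj] at huv
  simp only [lam, stepRot, bidir, fwd, bwd]
  by_cases h₁ : E u v <;> by_cases h₂ : E v u <;>
    simp [h₁, h₂, ← Complex.inv_eq_conj habs] at huv ⊢

theorem Balpha_apply (α : ℂ) (e f : DEdge E) :
    Balpha E α e f = if e.1.2 = f.1.1 ∧ e.1.1 ≠ f.1.2 then lam E α f else 0 := by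
  simp [Balpha, Bmat]

theorem prod_Balpha_apply_cycle (α : ℂ) (c : Fin (m + 1) → DEdge E) :
    ∏ i, Balpha E α (c i) (c (i + 1)) = if IsNBTEdgeCycle E c then ∏ i, lam E α (c i) else 0 := by
  simp_rw [Balpha_apply, prod_ite_zero, mem_univ, true_implies]
  rw [Fintype.prod_equiv (Equiv.addRight 1) (fun i => lam E α (c (i + 1))) (fun i => lam E α (c i))
    fun _ => rfl]
  exact if_congr Iff.rfl rfl rfl

theorem prod_lam_of_isNBTEdgeCycle {α : ℂ} (habs : ‖α‖ = 1) {R : ℕ} [NeZero R]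
    (hroot : α ^ R = 1) {c : Fin (m + 1) → DEdge E} (hc : IsNBTEdgeCycle E c) :
    ∏ i, lam E α (c i) = α ^ (cycleRot E (fun i => (c i).1.1) : ZMod R).val := by
  have hα : α ≠ 0 := norm_ne_zero_iff.1 (by rw [habs]; exact one_ne_zero)
  rw [← zpow_eq_pow_val_intCast hα hroot, cycleRot, zpow_sum₀ hα]
  refine prod_congr rfl fun i _ => ?_
  rw [lam_eq_zpow_stepRot habs, (hc i).1]

theorem sum_isNBTEdgeCycle {M : Type*} [AddCommMonoid M] (g : (Fin (m + 1) → Fin n) → M) :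
    ∑ c : Fin (m + 1) → DEdge E with IsNBTEdgeCycle E c, g (fun i => (c i).1.1) =
      ∑ v with IsNBTCycle E v, g v := by
  refine sum_bij' (fun c _ i => (c i).1.1)
    (fun v hv i => ⟨(v i, v (i + 1)), ((mem_filter.1 hv).2 i).1⟩) ?_ ?_ ?_
    (fun _ _ => rfl) (fun _ _ => rfl)
  · simp only [mem_filter, mem_univ, true_and]
    intro c hc i
    dsimp only
    refine ⟨(hc i).1 ▸ (c i).2, ?_⟩
    rw [← one_add_one_eq_two, ← add_assoc, ← (hc (i + 1)).1]
    exact (hc i).2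
  · simp only [mem_filter, mem_univ, true_and]
    intro v hv i
    refine ⟨rfl, ?_⟩
    dsimp only
    rw [add_assoc, one_add_one_eq_two]
    exact (hv i).2
  · intro c hc
    funext i
    exact Subtype.ext (Prod.ext rfl ((mem_filter.1 hc).2 i).1.symm)

theorem ncyc_eq_card (R : ℕ) [NeZero R] (k : ℕ) (r : ZMod R) :
    ncyc E R k r = #{w | IsTaillessCycle E k w ∧ (walkRot E k w : ZMod R) = r} := by
  simp only [ncyc, IsTaillessCycle, and_assoc]

theorem doubleWalk_snoc_self_zero_apply (v : Fin (m + 1) → Fin n) (j : Fin (2 * (m + 1) + 1)) :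
    doubleWalk (m + 1) (Fin.snoc v (v 0) : Fin (m + 1 + 1) → Fin n) j =
      v ((j : ℕ) : Fin (m + 1)) := by
  unfold doubleWalk
  split_ifs with hj
  · rw [Fin.snoc_self_zero_apply]
  · rw [Fin.snoc_self_zero_apply, Fin.val_mk]
    conv_rhs => rw [← Nat.sub_add_cancel (show m + 1 ≤ (j : ℕ) by omega)]
    rw [Nat.cast_add, Fin.natCast_self, add_zero]

theorem isNBTWalk_of_isNBTCycle {v : Fin (m + 1) → Fin n} (hv : IsNBTCycle E v) {N : ℕ}
    {w : Fin (N + 1) → Fin n} (hw : ∀ j, w j = v ((j : ℕ) : Fin (m + 1))) : IsNBTWalk E N w := by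
  constructor
  · intro i j hij
    rw [hw, hw, hij, Nat.cast_add, Nat.cast_one]
    exact (hv _).1
  · intro i j hij
    rw [hw, hw, hij, Nat.cast_add, Nat.cast_two]
    exact (hv _).2

theorem isNBTCycle_of_isNBTWalk {v : Fin (m + 1) → Fin n} {N : ℕ} (hN : m + 2 ≤ N)
    {w : Fin (N + 1) → Fin n} (hw : ∀ j, w j = v ((j : ℕ) : Fin (m + 1)))
    (h : IsNBTWalk E N w) : IsNBTCycle E v := by
  intro i
  have hadj := h.1 ⟨i, by omega⟩ ⟨i + 1, by omega⟩ rfl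
  have hne := h.2 ⟨i, by omega⟩ ⟨i + 2, by omega⟩ rfl
  simp only [hw, Nat.cast_add, Fin.cast_val_eq_self, Nat.cast_one, Nat.cast_ofNat] at hadj hne
  exact ⟨hadj, hne⟩

theorem isTaillessCycle_snoc_self_zero_iff (v : Fin (m + 1) → Fin n) :
    IsTaillessCycle E (m + 1) (Fin.snoc v (v 0)) ↔ IsNBTCycle E v := by
  have hclosed : (Fin.snoc v (v 0) : Fin (m + 1 + 1) → Fin n) 0 =
      (Fin.snoc v (v 0) : Fin (m + 1 + 1) → Fin n) (Fin.last (m + 1)) := by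
    simp [Fin.snoc_self_zero_apply]
  refine ⟨fun h => isNBTCycle_of_isNBTWalk (by omega) (doubleWalk_snoc_self_zero_apply v) h.2.2,
    fun h => ⟨hclosed, ?_, ?_⟩⟩
  · exact isNBTWalk_of_isNBTCycle h (Fin.snoc_self_zero_apply v)
  · exact isNBTWalk_of_isNBTCycle h (doubleWalk_snoc_self_zero_apply v)

theorem walkRot_snoc_self_zero (v : Fin (m + 1) → Fin n) :
    walkRot E (m + 1) (Fin.snoc v (v 0)) = cycleRot E v := by
  simp only [walkRot, cycleRot, Fin.snoc_castSucc, Fin.snoc_self_zero_succ]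

theorem sum_isNBTCycle {M : Type*} [AddCommMonoid M] (g : (Fin (m + 1 + 1) → Fin n) → M) :
    ∑ v with IsNBTCycle E v, g (Fin.snoc v (v 0)) = ∑ w with IsTaillessCycle E (m + 1) w, g w := by
  have hsnoc_init {w : Fin (m + 1 + 1) → Fin n} (hw : w 0 = w (Fin.last (m + 1))) :
      Fin.snoc (Fin.init w) (Fin.init w 0) = w := by
    rw [Fin.init, Fin.castSucc_zero, hw, Fin.snoc_init_self]
  refine sum_nbij' (fun v => Fin.snoc v (v 0)) Fin.init ?_ ?_ ?_ ?_ fun _ _ => rfl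
  · simp only [mem_filter, mem_univ, true_and]
    exact fun v => (isTaillessCycle_snoc_self_zero_iff v).2
  · simp only [mem_filter, mem_univ, true_and]
    intro w hw
    rw [← isTaillessCycle_snoc_self_zero_iff, hsnoc_init hw.1]
    exact hw
  · intro v _
    exact Fin.init_snoc _ _
  · intro w hw
    exact hsnoc_init (mem_filter.1 hw).2.1

end

theorem statement7_general {n : ℕ} (E : Fin n → Fin n → Prop)
    (α : ℂ) (habs : ‖α‖ = 1) (R : ℕ) [NeZero R]
    (hroot : α ^ R = 1) :
    ∀ k : ℕ, 1 ≤ k →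
      Matrix.trace (Balpha E α ^ k) = ∑ r : ZMod R, α ^ r.val * (ncyc E R k r : ℂ) := by
  intro k hk
  obtain ⟨m, rfl⟩ := Nat.exists_eq_add_of_le' hk
  calc trace (Balpha E α ^ (m + 1))
      = ∑ c : Fin (m + 1) → DEdge E with IsNBTEdgeCycle E c, ∏ i, lam E α (c i) := by
        simp_rw [trace_pow_succ_eq_sum_cycles, prod_Balpha_apply_cycle, sum_filter]
    _ = ∑ c : Fin (m + 1) → DEdge E with IsNBTEdgeCycle E c,
          α ^ (cycleRot E (fun i => (c i).1.1) : ZMod R).val :=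
        sum_congr rfl fun c hc => prod_lam_of_isNBTEdgeCycle habs hroot (mem_filter.1 hc).2
    _ = ∑ v with IsNBTCycle E v, α ^ (walkRot E (m + 1) (Fin.snoc v (v 0)) : ZMod R).val := by
        simp_rw [sum_isNBTEdgeCycle (fun v => α ^ (cycleRot E v : ZMod R).val),
          walkRot_snoc_self_zero]
    _ = ∑ w with IsTaillessCycle E (m + 1) w, α ^ (walkRot E (m + 1) w : ZMod R).val :=
        sum_isNBTCycle fun w => α ^ (walkRot E (m + 1) w : ZMod R).val
    _ = ∑ r : ZMod R, α ^ r.val * (ncyc E R (m + 1) r : ℂ) := by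
        simp only [sum_pow_val_eq_sum_mul_card, ncyc_eq_card, filter_filter, Int.cast_natCast]

/-- for every `k ≥ 1`, `tr((B_α)^k) = Σ_{r=0}^{R−1} α^r n_{(k,r)}`. -/
theorem statement7 {n : ℕ} (E : Fin n → Fin n → Prop) (hirr : ∀ u : Fin n, ¬ E u u)
    (α : ℂ) (habs : ‖α‖ = 1) (R : ℕ) [NeZero R]
    (hroot : α ^ R = 1) (hmin : ∀ k : ℕ, 0 < k → α ^ k = 1 → R ≤ k) :
    ∀ k : ℕ, 1 ≤ k →
      Matrix.trace (Balpha E α ^ k) = ∑ r : ZMod R, α ^ r.val * (ncyc E R k r : ℂ) :=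
  statement7_general E α habs R hroot

end CNBT
end
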